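/- arXiv:1202.2977 — 4 statements merged into one kernel-verified Lean document; each statement's English description precedes it below -/
import Mathlib

section
/- If T_OP(X, X') and T_OP(Y, Y') are isomorphic as semigroups, then X' and Y' are either order-isomorphic or order-anti-isomorphic (as chains with the induced order). -/
open Set Function

/-- The semigroup of order-preserving self-maps of `X` with range contained in `X'`. -/
def OPR {X : Type*} [LinearOrder X] (X' : Set X) : Set (X → X) :=
  {f | Monotone f ∧ Set.range f ⊆ X'}

/-- `φ` is a semigroup isomorphism from `T_OP(X, X')` onto `T_OP(Y, Y')`
(composition written left-to-right: `f * g = g ∘ f`). -/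
def IsSgIso {X Y : Type*} [LinearOrder X] [LinearOrder Y] (X' : Set X) (Y' : Set Y)
    (φ : (X → X) → (Y → Y)) : Prop :=
  Set.BijOn φ (OPR X') (OPR Y') ∧
    ∀ f ∈ OPR X', ∀ g ∈ OPR X', φ (g ∘ f) = φ g ∘ φ f

/-! The constant maps are exactly the left zeros of `T_OP(X, X')`, so an isomorphism `φ` maps
the constant `a` to a constant `θ a` (`θ = IsSgIso.pointMap`), and `θ` is a bijection `X' → Y'` with
`θ (f a) = (φ f) (θ a)`. Betweenness in `X'` is algebraic: `c` lies between `a` and `b` iff every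
`f ∈ T_OP(X, X')` identifying `a` and `b` also identifies `c` with them. Hence `θ` preserves
betweenness, and a betweenness-preserving bijection of chains is monotone or antitone. -/

section OPR

variable {X : Type*} [LinearOrder X] {X' : Set X}

lemma const_mem_OPR {a : X} (ha : a ∈ X') : (fun _ => a) ∈ OPR X' :=
  ⟨monotone_const, range_subset_iff.2 fun _ => ha⟩

lemma OPR.apply_mem {f : X → X} (hf : f ∈ OPR X') (x : X) : f x ∈ X' :=
  hf.2 (mem_range_self x)

lemma comp_mem_OPR {f g : X → X} (hf : f ∈ OPR X') (hg : g ∈ OPR X') : f ∘ g ∈ OPR X' :=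
  ⟨hf.1.comp hg.1, (range_comp_subset_range g f).trans hf.2⟩

lemma OPR.exists_eq_const_iff_forall_comp_eq {f : X → X} (hf : f ∈ OPR X') (hX' : X'.Nonempty) :
    (∃ a ∈ X', f = fun _ => a) ↔ ∀ g ∈ OPR X', f ∘ g = f := by
  refine ⟨fun ⟨a, _, hfa⟩ g _ => by rw [hfa]; rfl, fun h => ?_⟩
  obtain ⟨x, hx⟩ := hX'
  exact ⟨f x, OPR.apply_mem hf x, (h _ (const_mem_OPR hx)).symm⟩

lemma step_mem_OPR {t p q : X} (hp : p ∈ X') (hq : q ∈ X') (hpq : p ≤ q) :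
    (fun x => if x ≤ t then p else q) ∈ OPR X' := by
  refine ⟨fun u v huv => ?_, ?_⟩
  · dsimp only
    split_ifs with hu hv hv
    exacts [le_rfl, hpq, absurd (huv.trans hv) hu, le_rfl]
  · rintro _ ⟨x, rfl⟩
    dsimp only
    split_ifs
    exacts [hp, hq]

lemma mem_uIcc_iff_forall_OPR {a b c : X'} :
    c ∈ uIcc a b ↔ ∀ f ∈ OPR X', f a = f b → f c = f a := by
  constructor
  · intro hc f hf hab
    have hc' : (c : X) ∈ uIcc (a : X) b := by simpa only [mem_uIcc, Subtype.coe_le_coe] using hc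
    simpa only [hab, uIcc_self, mem_singleton_iff] using hf.1.mapsTo_uIcc hc'
  · intro h
    by_contra hc
    -- a point outside `uIcc a b` is separated from `a` and `b` by a two-valued step map
    simp only [uIcc, mem_Icc, not_and_or, not_le] at hc
    rcases hc with hlt | hgt
    · replace hlt : (c : X) < (a ⊓ b : X') := hlt
      have hca : ¬ (a : X) ≤ c := (hlt.trans_le inf_le_left).not_ge
      have hcb : ¬ (b : X) ≤ c := (hlt.trans_le (inf_le_right (a := a))).not_ge
      have := h _ (step_mem_OPR (t := (c : X)) c.2 (a ⊓ b).2 hlt.le)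
        (by simp only [if_neg hca, if_neg hcb])
      simp only [le_refl, if_true, if_neg hca] at this
      exact hlt.ne this
    · replace hgt : ((a ⊔ b : X') : X) < c := hgt
      have hac : (a : X) ≤ (a ⊔ b : X') := le_sup_left (a := a)
      have hbc : (b : X) ≤ (a ⊔ b : X') := le_sup_right (a := a)
      have := h _ (step_mem_OPR (t := ((a ⊔ b : X') : X)) (a ⊔ b).2 c.2 hgt.le)
        (by simp only [if_pos hac, if_pos hbc])
      simp only [if_pos hac, if_neg hgt.not_ge] at this
      exact hgt.ne' this

end OPR

namespace IsSgIso

variable {X Y : Type*} [LinearOrder X] [LinearOrder Y] {X' : Set X} {Y' : Set Y}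
  {φ : (X → X) → (Y → Y)} (hφ : IsSgIso X' Y' φ)
include hφ

lemma comp_eq_self_iff {f : X → X} (hf : f ∈ OPR X') :
    (∀ g ∈ OPR X', f ∘ g = f) ↔ ∀ G ∈ OPR Y', φ f ∘ G = φ f := by
  constructor
  · intro h G hG
    obtain ⟨g, hg, rfl⟩ := hφ.1.surjOn hG
    rw [← hφ.2 g hg f hf, h g hg]
  · intro h g hg
    exact hφ.1.injOn (comp_mem_OPR hf hg) hf (by rw [hφ.2 g hg f hf, h _ (hφ.1.mapsTo hg)])

lemma exists_map_const_eq_const (hY' : Y'.Nonempty) {a : X} (ha : a ∈ X') :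
    ∃ b ∈ Y', φ (fun _ => a) = fun _ => b :=
  (OPR.exists_eq_const_iff_forall_comp_eq (hφ.1.mapsTo (const_mem_OPR ha)) hY').2 <|
    (hφ.comp_eq_self_iff (const_mem_OPR ha)).1 fun _ _ => rfl

lemma exists_const_eq_map_const (hX' : X'.Nonempty) {b : Y} (hb : b ∈ Y') :
    ∃ a ∈ X', (fun _ => b) = φ (fun _ => a) := by
  obtain ⟨f, hf, hfb⟩ := hφ.1.surjOn (const_mem_OPR hb)
  obtain ⟨a, ha, rfl⟩ := (OPR.exists_eq_const_iff_forall_comp_eq hf hX').2 <|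
    (hφ.comp_eq_self_iff hf).2 (by rw [hfb]; exact fun _ _ => rfl)
  exact ⟨a, ha, hfb.symm⟩

noncomputable def pointMap (hY' : Y'.Nonempty) (a : X') : Y' :=
  ⟨(hφ.exists_map_const_eq_const hY' a.2).choose,
    (hφ.exists_map_const_eq_const hY' a.2).choose_spec.1⟩

variable (hY' : Y'.Nonempty)

lemma map_const_eq_pointMap (a : X') : φ (fun _ => (a : X)) = fun _ => (hφ.pointMap hY' a : Y) :=
  (hφ.exists_map_const_eq_const hY' a.2).choose_spec.2

lemma pointMap_injective : Injective (hφ.pointMap hY') := fun a b hab =>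
  Subtype.ext <| congrFun (hφ.1.injOn (const_mem_OPR a.2) (const_mem_OPR b.2) <| by
    rw [hφ.map_const_eq_pointMap hY', hφ.map_const_eq_pointMap hY', hab]) a

lemma pointMap_surjective (hX' : X'.Nonempty) : Surjective (hφ.pointMap hY') := by
  rintro ⟨b, hb⟩
  obtain ⟨a, ha, hab⟩ := hφ.exists_const_eq_map_const hX' hb
  exact ⟨⟨a, ha⟩,
    Subtype.ext <| congrFun (hab.trans (hφ.map_const_eq_pointMap hY' ⟨a, ha⟩)).symm b⟩

lemma pointMap_apply {f : X → X} (hf : f ∈ OPR X') (a : X') :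
    (hφ.pointMap hY' ⟨f a, OPR.apply_mem hf a⟩ : Y) = φ f (hφ.pointMap hY' a) := by
  have h := congrFun (hφ.2 _ (const_mem_OPR a.2) f hf) (hφ.pointMap hY' a)
  rw [hφ.map_const_eq_pointMap hY'] at h
  exact (congrFun (hφ.map_const_eq_pointMap hY' ⟨f a, OPR.apply_mem hf a⟩) _).symm.trans h

lemma pointMap_mem_uIcc {a b c : X'} (hc : c ∈ uIcc a b) :
    hφ.pointMap hY' c ∈ uIcc (hφ.pointMap hY' a) (hφ.pointMap hY' b) := by
  rw [mem_uIcc_iff_forall_OPR] at hc ⊢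
  intro F hF hab
  obtain ⟨f, hf, rfl⟩ := hφ.1.surjOn hF
  simp only [← hφ.pointMap_apply hY' hf] at hab ⊢
  have := hc f hf (congrArg Subtype.val (hφ.pointMap_injective hY' (Subtype.ext hab)))
  simp only [this]

end IsSgIso

/-- if `T_OP(X, X') ≅ T_OP(Y, Y')`, then `X'` and `Y'` are order-isomorphic
or order-anti-isomorphic. -/
theorem stmt_3 {X Y : Type*} [LinearOrder X] [LinearOrder Y] (X' : Set X) (Y' : Set Y)
    (hX' : X'.Nontrivial) (hY' : Y'.Nontrivial)
    (φ : (X → X) → (Y → Y)) (hφ : IsSgIso X' Y' φ) :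
    Nonempty (X' ≃o Y') ∨ Nonempty (X' ≃o (↥Y')ᵒᵈ) := by
  set θ := hφ.pointMap hY'.nonempty
  have hθ : Bijective θ := ⟨hφ.pointMap_injective _, hφ.pointMap_surjective _ hX'.nonempty⟩
  rcases monotone_or_antitone_iff_uIcc.2 fun _ _ _ => hφ.pointMap_mem_uIcc hY'.nonempty with
    hmono | hanti
  · exact Or.inl ⟨(hmono.strictMono_of_injective hθ.1).orderIsoOfSurjective θ hθ.2⟩
  · exact Or.inr ⟨(hanti.strictAnti_of_injective hθ.1).dual_right.orderIsoOfSurjective _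
      (OrderDual.toDual.surjective.comp hθ.2)⟩
end

section
/- Let φ : T_OP(X, X') → T_OP(Y, Y') be a semigroup isomorphism with induced bijection θ_φ : X' → Y'. Then for every α ∈ T_OP(X, X'), θ_φ maps Fix(α) ∩ X' bijectively onto Fix(φ(α)) ∩ Y'; that is, for a ∈ X', aα = a if and only if ā(φ(α)) = ā. -/
open Set Function

section Semiconj

variable {α β : Type*} {s : Set α} {t : Set β} {θ : α → β} {f : α → α} {g : β → β}

theorem apply_eq_self_iff_of_semiconjOn (hθ : InjOn θ s) (hf : MapsTo f s s)
    (hsemi : ∀ a ∈ s, θ (f a) = g (θ a)) {a : α} (ha : a ∈ s) :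
    f a = a ↔ g (θ a) = θ a := by
  rw [← hsemi a ha]
  exact ⟨congrArg θ, fun h => hθ (hf ha) ha h⟩

theorem bijOn_fixed_inter_of_semiconjOn (hθ : BijOn θ s t) (hf : MapsTo f s s)
    (hsemi : ∀ a ∈ s, θ (f a) = g (θ a)) :
    BijOn θ ({x | f x = x} ∩ s) ({y | g y = y} ∩ t) := by
  have hfix : ∀ {a}, a ∈ s → (f a = a ↔ g (θ a) = θ a) :=
    apply_eq_self_iff_of_semiconjOn hθ.injOn hf hsemi
  refine ⟨fun a ⟨hfa, ha⟩ => ⟨hfix ha |>.1 hfa, hθ.mapsTo ha⟩,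
    hθ.injOn.mono inter_subset_right, ?_⟩
  rintro _ ⟨hgy, hy⟩
  obtain ⟨a, ha, rfl⟩ := hθ.surjOn hy
  exact ⟨a, ⟨hfix ha |>.2 hgy, ha⟩, rfl⟩

end Semiconj

theorem const_mem_OPR_s6 {X : Type*} [LinearOrder X] {X' : Set X} {a : X} (ha : a ∈ X') :
    const X a ∈ OPR X' :=
  ⟨monotone_const, range_subset_iff.2 fun _ => ha⟩

theorem IsSgIso.apply_map_eq_map_apply {X Y : Type*} [LinearOrder X] [LinearOrder Y]
    {X' : Set X} {Y' : Set Y} {φ : (X → X) → (Y → Y)} (hφ : IsSgIso X' Y' φ) {θ : X → Y}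
    (hθ : ∀ a ∈ X', φ (const X a) = const Y (θ a)) {α : X → X} (hα : α ∈ OPR X')
    {a : X} (ha : a ∈ X') : θ (α a) = φ α (θ a) := by
  have hcomp : φ (const X (α a)) = φ α ∘ φ (const X a) := hφ.2 _ (const_mem_OPR_s6 ha) _ hα
  rw [hθ _ (hα.2 ⟨a, rfl⟩), hθ _ ha] at hcomp
  exact congrFun hcomp (θ a)

theorem stmt_6_general {X Y : Type*} [LinearOrder X] [LinearOrder Y] (X' : Set X) (Y' : Set Y)
    (φ : (X → X) → (Y → Y)) (hφ : IsSgIso X' Y' φ)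
    (θ : X → Y) (hbij : Set.BijOn θ X' Y')
    (hθ : ∀ a ∈ X', φ (Function.const X a) = Function.const Y (θ a)) :
    ∀ α ∈ OPR X',
      (∀ a ∈ X', α a = a ↔ φ α (θ a) = θ a) ∧
      Set.BijOn θ ({x | α x = x} ∩ X') ({y | φ α y = y} ∩ Y') := by
  intro α hα
  have hmaps : MapsTo α X' X' := fun a _ => hα.2 ⟨a, rfl⟩
  have hsemi : ∀ a ∈ X', θ (α a) = φ α (θ a) := fun a ha => hφ.apply_map_eq_map_apply hθ hα ha
  exact ⟨fun a ha => apply_eq_self_iff_of_semiconjOn hbij.injOn hmaps hsemi ha,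
    bijOn_fixed_inter_of_semiconjOn hbij hmaps hsemi⟩

/-- `θ_φ` maps `Fix(α) ∩ X'` bijectively onto `Fix(φ(α)) ∩ Y'`;
for `a ∈ X'`, `aα = a` iff `ā(φ(α)) = ā`. -/
theorem stmt_6 {X Y : Type*} [LinearOrder X] [LinearOrder Y] (X' : Set X) (Y' : Set Y)
    (hX' : X'.Nontrivial) (hY' : Y'.Nontrivial)
    (φ : (X → X) → (Y → Y)) (hφ : IsSgIso X' Y' φ)
    (θ : X → Y) (hbij : Set.BijOn θ X' Y')
    (hθ : ∀ a ∈ X', φ (Function.const X a) = Function.const Y (θ a)) :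
    ∀ α ∈ OPR X',
      (∀ a ∈ X', α a = a ↔ φ α (θ a) = θ a) ∧
      Set.BijOn θ ({x | α x = x} ∩ X') ({y | φ α y = y} ∩ Y') :=
  stmt_6_general X' Y' φ hφ θ hbij hθ
end

section
/- Let X be a chain and X' ⊆ X. If S is a finite nonempty subset of X', then there exists an idempotent μ ∈ T_OP(X, X') with ran μ = S. -/
/-! Rounding every point down to the nearest element of `S` below it (and points below `min S`
up to `min S`) is a monotone retraction of `X` onto `S`. -/

open Set Function

namespace Finset

variable {α : Type*} [LinearOrder α] (s : Finset α) (hs : s.Nonempty)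

def floorRetract (x : α) : α :=
  if h : (s.filter (· ≤ x)).Nonempty then (s.filter (· ≤ x)).max' h else s.min' hs

theorem floorRetract_mem (x : α) : s.floorRetract hs x ∈ s := by
  unfold floorRetract
  split_ifs with h
  · exact filter_subset _ _ (max'_mem _ h)
  · exact min'_mem s hs

theorem floorRetract_of_mem {x : α} (hx : x ∈ s) : s.floorRetract hs x = x := by
  have hx' : x ∈ s.filter (· ≤ x) := mem_filter.mpr ⟨hx, le_rfl⟩
  rw [floorRetract, dif_pos ⟨x, hx'⟩]
  exact le_antisymm (max'_le _ _ _ fun y hy => (mem_filter.mp hy).2) (le_max' _ _ hx')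

theorem monotone_floorRetract : Monotone (s.floorRetract hs) := by
  intro x y hxy
  by_cases hx : (s.filter (· ≤ x)).Nonempty
  · have hsub : s.filter (· ≤ x) ⊆ s.filter (· ≤ y) :=
      monotone_filter_right s fun _ _ h => h.trans hxy
    rw [floorRetract, floorRetract, dif_pos hx, dif_pos (hx.mono hsub)]
    exact max'_subset hx hsub
  · rw [floorRetract, dif_neg hx]
    exact min'_le s _ (floorRetract_mem s hs y)

theorem floorRetract_comp_self : s.floorRetract hs ∘ s.floorRetract hs = s.floorRetract hs :=
  funext fun x => floorRetract_of_mem s hs (floorRetract_mem s hs x)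

theorem range_floorRetract : Set.range (s.floorRetract hs) = s :=
  Set.Subset.antisymm (Set.range_subset_iff.mpr (floorRetract_mem s hs))
    fun x hx => ⟨x, floorRetract_of_mem s hs hx⟩

end Finset

/-- every finite nonempty subset `S ⊆ X'` is the range of some idempotent
of `T_OP(X, X')`. -/
theorem stmt_14 {X : Type*} [LinearOrder X] (X' : Set X) (S : Set X)
    (hSX' : S ⊆ X') (hfin : S.Finite) (hne : S.Nonempty) :
    ∃ μ ∈ OPR X', μ ∘ μ = μ ∧ Set.range μ = S := by
  obtain ⟨s, rfl⟩ := hfin.exists_finset_coe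
  have hs : s.Nonempty := Finset.coe_nonempty.mp hne
  exact ⟨s.floorRetract hs,
    ⟨s.monotone_floorRetract hs, (s.range_floorRetract hs).subset.trans hSX'⟩,
    s.floorRetract_comp_self hs, s.range_floorRetract hs⟩
end

section
/- With X = ℝ, X' = {1, 2}, Y = [2, 5) ⊆ ℝ, Y' = {3, 4}: the semigroups T_OP(ℝ, {1,2}) and T_OP([2,5), {3,4}) are isomorphic, although ℝ and [2,5) are neither order-isomorphic nor order-anti-isomorphic. -/
/-!
For `p < q`, a map `g ∈ T_OP(X, {p, q})` either collapses `{p, q}` onto `q`, collapses it onto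
`p`, or fixes both points; accordingly `g ∘ f` is the constant `q`, the constant `p`, or `f`.
Hence any bijection `T_OP(X, {p, q}) → T_OP(Y, {r, s})` that respects these three classes and
sends the constants to the constants is a semigroup isomorphism, and one exists as soon as the
classes have pairwise equal cardinalities. A map `f` is determined by the upper set `f⁻¹(q)`, and
when `X` embeds into `EReal` such an upper set is pinned down by its infimum in `EReal` together
with whether that infimum is attained; so each class has at most `𝔠` elements. It has at least as
many as there are thresholds producing it, namely the points of `(-∞, p]`, `(p, q]` or `(q, ∞)`,
and in both examples these are `𝔠` many.

`ℝ` has neither a least nor a greatest element, while `2` is least in `[2, 5)`.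
-/

open Set Function

open Cardinal

universe u

theorem Equiv.bijOn_of_apply {α β : Type*} {s : Set α} {t : Set β} (e : s ≃ t) {φ : α → β}
    (h : ∀ x : s, φ x = e x) : BijOn φ s t := by
  refine ⟨fun x hx => h ⟨x, hx⟩ ▸ (e _).2, fun x hx y hy hxy => ?_, fun y hy => ?_⟩
  · rw [h ⟨x, hx⟩, h ⟨y, hy⟩] at hxy
    exact congrArg Subtype.val (e.injective (Subtype.ext hxy))
  · exact ⟨e.symm ⟨y, hy⟩, (e.symm ⟨y, hy⟩).2, by rw [h, Equiv.apply_symm_apply]⟩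

theorem Equiv.exists_fiberwise_apply_eq_apply_eq {S T : Type u} {ι : Type*} {κ : S → ι}
    {κ' : T → ι} (hcard : ∀ i, #{x // κ x = i} = #{y // κ' y = i}) {a₁ a₂ : S} {b₁ b₂ : T}
    (h₁ : κ' b₁ = κ a₁) (h₂ : κ' b₂ = κ a₂) (h₁₂ : κ a₁ ≠ κ a₂) :
    ∃ e : S ≃ T, (∀ x, κ' (e x) = κ x) ∧ e a₁ = b₁ ∧ e a₂ = b₂ := by
  classical
  have swap_preserves {e : S ≃ T} (he : ∀ x, κ' (e x) = κ x) {a : S} {b : T} (hab : κ' b = κ a)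
      (x : S) : κ' ((e.trans (Equiv.swap (e a) b)) x) = κ x := by
    simp only [Equiv.trans_apply, Equiv.swap_apply_def]
    split_ifs <;> grind
  let e₀ : S ≃ T := Equiv.ofFiberEquiv fun i => Classical.choice (Cardinal.eq.1 (hcard i))
  have he₀ : ∀ x, κ' (e₀ x) = κ x := Equiv.ofFiberEquiv_map _
  let e₁ := e₀.trans (Equiv.swap (e₀ a₁) b₁)
  have he₁ := swap_preserves he₀ h₁
  refine ⟨e₁.trans (Equiv.swap (e₁ a₂) b₂), swap_preserves he₁ h₂, ?_, by simp⟩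
  have hb₁ : e₁ a₁ = b₁ := Equiv.swap_apply_left _ _
  rw [Equiv.trans_apply, hb₁, Equiv.swap_apply_of_ne_of_ne]
  · exact fun h => h₁₂ (by rw [← h₁, h, he₁])
  · exact fun h => h₁₂ (by rw [← h₁, ← h₂, h])

section UpperSet

variable {α β : Type*} [LinearOrder α] [CompleteLinearOrder β] {U V : Set α}

theorem IsUpperSet.mem_iff_sInf_image (e : α ↪o β) (hU : IsUpperSet U) (x : α) :
    x ∈ U ↔ sInf (e '' U) < e x ∨ e x = sInf (e '' U) ∧ sInf (e '' U) ∈ e '' U := by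
  constructor
  · intro hx
    rcases (sInf_le (mem_image_of_mem e hx)).lt_or_eq with h | h
    · exact .inl h
    · exact .inr ⟨h.symm, h ▸ mem_image_of_mem e hx⟩
  · rintro (h | ⟨h, u, hu, hue⟩)
    · obtain ⟨_, ⟨u, hu, rfl⟩, hux⟩ := sInf_lt_iff.1 h
      exact hU (e.lt_iff_lt.1 hux).le hu
    · rwa [← e.injective (hue.trans h.symm)]

theorem IsUpperSet.eq_of_sInf_image (e : α ↪o β) (hU : IsUpperSet U) (hV : IsUpperSet V)
    (h : sInf (e '' U) = sInf (e '' V)) (hmem : sInf (e '' U) ∈ e '' U ↔ sInf (e '' V) ∈ e '' V) :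
    U = V := by
  ext x
  rw [hU.mem_iff_sInf_image e, hV.mem_iff_sInf_image e, hmem, h]

end UpperSet

theorem UpperSet.mk_le_of_orderEmbedding {α β : Type u} [LinearOrder α] [CompleteLinearOrder β]
    (e : α ↪o β) : #(UpperSet α) ≤ #(β × Prop) := by
  refine mk_le_of_injective (f := fun U : UpperSet α =>
    (sInf (e '' (U : Set α)), sInf (e '' (U : Set α)) ∈ e '' (U : Set α))) fun U V h => ?_
  simp only [Prod.mk.injEq] at h
  exact SetLike.coe_injective (U.upper.eq_of_sInf_image e V.upper h.1 (iff_of_eq h.2))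

theorem EReal.mk_prod_prop : #(EReal × Prop) = 𝔠 := by
  have mk_ereal : #EReal = 𝔠 := by
    change #(Option (Option ℝ)) = 𝔠
    rw [mk_option, mk_option, mk_real, add_one_eq aleph0_le_continuum,
      add_one_eq aleph0_le_continuum]
  rw [mk_prod, lift_id, lift_id, mk_ereal, mk_Prop]
  exact mul_eq_left aleph0_le_continuum (nat_lt_continuum 2).le two_ne_zero

namespace OPR

section Kind

variable {α : Type*} [LinearOrder α] {p q : α} {f g : α → α}

theorem mem_pair_iff : f ∈ OPR {p, q} ↔ Monotone f ∧ ∀ x, f x = p ∨ f x = q := by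
  simp [OPR, range_subset_iff]

theorem const_mem_pair_left : (fun _ => p) ∈ OPR ({p, q} : Set α) :=
  mem_pair_iff.2 ⟨monotone_const, fun _ => .inl rfl⟩

theorem const_mem_pair_right : (fun _ => q) ∈ OPR ({p, q} : Set α) :=
  mem_pair_iff.2 ⟨monotone_const, fun _ => .inr rfl⟩

/-- For `f ∈ OPR {p, q}` with `p < q`: `gt`, `lt` or `eq` according as `f` collapses `{p, q}`
onto `q`, collapses it onto `p`, or fixes it. -/
def pairKind (p q : α) (f : α → α) : Ordering :=
  if f p = q then .gt else if f q = p then .lt else .eq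

def kindAct (p q : α) : Ordering → (α → α) → (α → α)
  | .lt, _ => fun _ => p
  | .eq, f => f
  | .gt, _ => fun _ => q

theorem comp_eq_kindAct (hpq : p < q) (hf : f ∈ OPR {p, q}) (hg : g ∈ OPR {p, q}) :
    g ∘ f = kindAct p q (pairKind p q g) f := by
  rw [mem_pair_iff] at hf hg
  have hmono : g p ≤ g q := hg.1 hpq.le
  funext x
  rcases hf.2 x with hx | hx <;> rcases hg.2 p with hp | hp <;> rcases hg.2 q with hq | hq <;>
    simp_all [pairKind, kindAct, hpq.ne, hpq.ne', hpq.not_ge]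

theorem pairKind_const_left (hpq : p < q) : pairKind p q (fun _ => p) = .lt := by
  simp [pairKind, hpq.ne]

theorem pairKind_const_right : pairKind p q (fun _ => q) = .gt := by
  simp [pairKind]

theorem isUpperSet_preimage_right (hpq : p < q) (hf : f ∈ OPR {p, q}) :
    IsUpperSet {x | f x = q} := by
  intro x y hxy hx
  rcases (mem_pair_iff.1 hf).2 y with hy | hy
  · have := (mem_pair_iff.1 hf).1 hxy
    simp_all [hpq.not_ge]
  · exact hy

def threshold (p q a : α) : α → α := fun x => if a ≤ x then q else p

theorem threshold_mem (hpq : p ≤ q) (a : α) : threshold p q a ∈ OPR {p, q} := by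
  refine mem_pair_iff.2 ⟨fun x y hxy => ?_, fun x => ?_⟩ <;> unfold threshold <;>
    split_ifs <;> grind

theorem threshold_injective (hpq : p ≠ q) : Injective (threshold p q) := by
  intro a b h
  have ha := congrFun h a
  have hb := congrFun h b
  grind [threshold]

def kindThresholds (p q : α) : Ordering → Set α
  | .gt => Iic p
  | .eq => Ioc p q
  | .lt => Ioi q

theorem pairKind_threshold (hpq : p < q) {o : Ordering} {a : α} (ha : a ∈ kindThresholds p q o) :
    pairKind p q (threshold p q a) = o := by
  cases o <;> simp only [kindThresholds, mem_Iic, mem_Ioc, mem_Ioi] at ha <;>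
    grind [pairKind, threshold]

end Kind

section Card

variable {α : Type} [LinearOrder α] {p q : α}

theorem mk_le_continuum (hpq : p < q) (e : α ↪o EReal) : #(OPR ({p, q} : Set α)) ≤ 𝔠 := by
  refine le_trans (mk_le_of_injective (f := fun f : OPR ({p, q} : Set α) =>
    (⟨{x | f.1 x = q}, isUpperSet_preimage_right hpq f.2⟩ : UpperSet α)) fun f g h => ?_)
    ((UpperSet.mk_le_of_orderEmbedding e).trans EReal.mk_prod_prop.le)
  have hfg : ∀ x, f.1 x = q ↔ g.1 x = q := fun x => Set.ext_iff.1 (congrArg SetLike.coe h) x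
  have hf := (mem_pair_iff.1 f.2).2
  have hg := (mem_pair_iff.1 g.2).2
  exact Subtype.ext (funext fun x => by grind)

theorem mk_pairKind_eq (hpq : p < q) (e : α ↪o EReal) (o : Ordering)
    (ho : 𝔠 ≤ #(kindThresholds p q o)) :
    #{f : OPR ({p, q} : Set α) // pairKind p q f = o} = 𝔠 := by
  refine le_antisymm ((mk_subtype_le _).trans (mk_le_continuum hpq e)) (ho.trans ?_)
  refine mk_le_of_injective (f := fun a : kindThresholds p q o =>
    ⟨⟨threshold p q a, threshold_mem hpq.le a⟩, pairKind_threshold hpq a.2⟩) fun a b h => ?_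
  exact Subtype.ext (threshold_injective hpq.ne (congrArg (fun f => f.1.1) h))

end Card

section Iso

theorem isSgIso_of_equiv {α β : Type*} [LinearOrder α] [LinearOrder β] {p q : α} {r s : β}
    (hpq : p < q) (hrs : r < s) (e : OPR ({p, q} : Set α) ≃ OPR ({r, s} : Set β))
    (he : ∀ f, pairKind r s (e f) = pairKind p q f)
    (hp : e ⟨fun _ => p, const_mem_pair_left⟩ = ⟨fun _ => r, const_mem_pair_left⟩)
    (hq : e ⟨fun _ => q, const_mem_pair_right⟩ = ⟨fun _ => s, const_mem_pair_right⟩)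
    {φ : (α → α) → (β → β)} (hφ : ∀ f : OPR ({p, q} : Set α), φ f = e f) :
    IsSgIso {p, q} {r, s} φ := by
  refine ⟨e.bijOn_of_apply hφ, fun f hf g hg => ?_⟩
  rw [comp_eq_kindAct hpq hf hg, (hφ ⟨g, hg⟩ : φ g = _), (hφ ⟨f, hf⟩ : φ f = _),
    comp_eq_kindAct hrs (e _).2 (e _).2, he]
  cases pairKind p q g
  · rw [kindAct, kindAct, hφ ⟨_, const_mem_pair_left⟩, hp]
  · exact hφ ⟨f, hf⟩
  · rw [kindAct, kindAct, hφ ⟨_, const_mem_pair_right⟩, hq]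

theorem exists_isSgIso {α β : Type u} [LinearOrder α] [LinearOrder β] {p q : α} {r s : β}
    (hpq : p < q) (hrs : r < s)
    (hcard : ∀ o, #{f : OPR ({p, q} : Set α) // pairKind p q f = o} =
      #{g : OPR ({r, s} : Set β) // pairKind r s g = o}) :
    ∃ φ : (α → α) → (β → β), IsSgIso {p, q} {r, s} φ := by
  classical
  obtain ⟨e, he, hp, hq⟩ := Equiv.exists_fiberwise_apply_eq_apply_eq hcard
    (a₁ := ⟨_, const_mem_pair_left⟩) (b₁ := ⟨_, const_mem_pair_left⟩)
    (a₂ := ⟨_, const_mem_pair_right⟩) (b₂ := ⟨_, const_mem_pair_right⟩)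
    (by rw [pairKind_const_left hpq, pairKind_const_left hrs])
    (by rw [pairKind_const_right, pairKind_const_right])
    (by rw [pairKind_const_left hpq, pairKind_const_right]; decide)
  exact ⟨fun f => if hf : f ∈ OPR {p, q} then e ⟨f, hf⟩ else id,
    isSgIso_of_equiv hpq hrs e he hp hq fun f => dif_pos f.2⟩

end Iso

end OPR

theorem continuum_le_mk_of_Ioo_subset {S : Set ℝ} {s : Set S} {a b : ℝ} (hab : a < b)
    (hS : Ioo a b ⊆ S) (hs : ∀ x : S, (x : ℝ) ∈ Ioo a b → x ∈ s) : 𝔠 ≤ #s :=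
  calc 𝔠 = #(Ioo a b) := (mk_Ioo_real hab).symm
    _ = #(((↑) : S → ℝ) ⁻¹' Ioo a b) := (mk_preimage_of_injective_of_subset_range _ _
        Subtype.val_injective (by rwa [Subtype.range_coe])).symm
    _ ≤ #s := mk_le_mk_of_subset fun x => hs x

theorem continuum_le_mk_kindThresholds_real (o : Ordering) :
    𝔠 ≤ #(OPR.kindThresholds (1 : ℝ) 2 o) := by
  cases o
  exacts [(mk_Ioi_real 2).ge, (mk_Ioc_real one_lt_two).ge, (mk_Iic_real 1).ge]

theorem continuum_le_mk_kindThresholds_Ico (o : Ordering) :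
    𝔠 ≤ #(OPR.kindThresholds (⟨3, by norm_num⟩ : Ico (2 : ℝ) 5) ⟨4, by norm_num⟩ o) := by
  cases o
  · exact continuum_le_mk_of_Ioo_subset (a := 4) (b := 5) (by norm_num)
      (fun x hx => ⟨by linarith [hx.1], hx.2⟩) fun x hx => hx.1
  · exact continuum_le_mk_of_Ioo_subset (a := 3) (b := 4) (by norm_num)
      (fun x hx => ⟨by linarith [hx.1], by linarith [hx.2]⟩) fun x hx => ⟨hx.1, hx.2.le⟩
  · exact continuum_le_mk_of_Ioo_subset (a := 2) (b := 3) (by norm_num)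
      (fun x hx => ⟨hx.1.le, by linarith [hx.2]⟩) fun x hx => hx.2.le

theorem Equiv.not_forall_le_iff_of_isMin {α β : Type*} [Preorder α] [NoMinOrder α] [Preorder β]
    (θ : α ≃ β) {m : β} (hm : IsMin m) : ¬ ∀ a b, a ≤ b ↔ θ a ≤ θ b := fun h =>
  let E : α ≃o β := ⟨θ, fun {a b} => (h a b).symm⟩
  not_isMin (E.symm m) (E.isMin_apply.1 (by rwa [E.apply_symm_apply]))

theorem Equiv.not_forall_le_iff_swap_of_isMin {α β : Type*} [Preorder α] [NoMaxOrder α]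
    [Preorder β] (θ : α ≃ β) {m : β} (hm : IsMin m) : ¬ ∀ a b, a ≤ b ↔ θ b ≤ θ a := fun h =>
  let E : α ≃o βᵒᵈ := ⟨θ.trans OrderDual.toDual, fun {a b} => (h a b).symm⟩
  not_isMax (E.symm (OrderDual.toDual m))
    (E.isMax_apply.1 (by rwa [E.apply_symm_apply, isMax_toDual_iff]))

/-- `T_OP(ℝ, {1, 2}) ≅ T_OP([2, 5), {3, 4})`, although `ℝ` and `[2, 5)` are
neither order-isomorphic nor order-anti-isomorphic. -/
theorem stmt_18 :
    (∃ φ : (ℝ → ℝ) → (↥(Set.Ico (2 : ℝ) 5) → ↥(Set.Ico (2 : ℝ) 5)),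
      IsSgIso ({1, 2} : Set ℝ)
        ({⟨3, by norm_num⟩, ⟨4, by norm_num⟩} : Set ↥(Set.Ico (2 : ℝ) 5)) φ) ∧
    ¬ ∃ θ : ℝ ≃ ↥(Set.Ico (2 : ℝ) 5),
        (∀ a b : ℝ, a ≤ b ↔ θ a ≤ θ b) ∨ (∀ a b : ℝ, a ≤ b ↔ θ b ≤ θ a) := by
  have h34 : (⟨3, by norm_num⟩ : Ico (2 : ℝ) 5) < ⟨4, by norm_num⟩ :=
    Subtype.mk_lt_mk.2 (by norm_num)
  have hmin : IsMin (⟨2, by norm_num⟩ : Ico (2 : ℝ) 5) := fun x _ => x.2.1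
  let e : ℝ ↪o EReal := OrderEmbedding.ofStrictMono _ EReal.coe_strictMono
  refine ⟨OPR.exists_isSgIso one_lt_two h34 fun o => ?_, ?_⟩
  · rw [OPR.mk_pairKind_eq one_lt_two e o (continuum_le_mk_kindThresholds_real o),
      OPR.mk_pairKind_eq h34 ((OrderEmbedding.subtype _).trans e) o
        (continuum_le_mk_kindThresholds_Ico o)]
  · rintro ⟨θ, h | h⟩
    exacts [θ.not_forall_le_iff_of_isMin hmin h, θ.not_forall_le_iff_swap_of_isMin hmin h]
end
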